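/- arXiv:2311.01960 — 5 statements merged into one kernel-verified Lean document; each statement's English description precedes it below -/
import Mathlib

section
/- Let U ∈ ℝ^{n×r}, V ∈ ℝ^{r×d}, and p ∈ ℕ, and let A ∈ ℝ^{n×d} be the entrywise p-th power of U·V, i.e. A_{ij} = ((UV)_{ij})^p. Then the rank of A is at most r^p. -/
/-- the entrywise p-th power of U·V has rank at most r^p. -/
theorem rank_entrywise_pow_le
    (n r d p : ℕ) (U : Matrix (Fin n) (Fin r) ℝ) (V : Matrix (Fin r) (Fin d) ℝ)
    (A : Matrix (Fin n) (Fin d) ℝ) (hA : ∀ i j, A i j = ((U * V) i j) ^ p) :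
    A.rank ≤ r ^ p := by
  set B : Matrix (Fin n) (Fin p → Fin r) ℝ := fun i f => ∏ t, U i (f t) with hB
  set C : Matrix (Fin p → Fin r) (Fin d) ℝ := fun f j => ∏ t, V (f t) j with hC
  have hABC : A = B * C := by
    ext i j
    rw [hA i j, Matrix.mul_apply, Matrix.mul_apply]
    rw [← Fin.prod_const p, Finset.prod_univ_sum]
    simp [hB, hC, Finset.prod_mul_distrib, Matrix.mul_apply]
  calc A.rank ≤ B.rank := by rw [hABC]; exact Matrix.rank_mul_le_left B C
    _ ≤ Fintype.card (Fin p → Fin r) := Matrix.rank_le_card_width B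
    _ = r ^ p := by simp
end

section
/- Let p be an odd natural number, let U ∈ ℝ^{n×r} and V ∈ ℝ^{r×d}, and suppose that at most m pairs (i,j) satisfy (UV)_{ij} < 0. Then the matrix M ∈ ℝ^{n×d} with entries M_{ij} = |(UV)_{ij}|^p has rank at most r^p + m. -/
/-!
Expanding `((U * V) i j) ^ p = (∑ k, U i k * V k j) ^ p` over all words `w : Fin p → Fin r`
factors the entrywise `p`-th power of `U * V` through `r ^ p` columns, so it has rank at most
`r ^ p`. It agrees with `M` wherever `(U * V) i j ≥ 0`, so the difference is supported on the at
most `m` negative entries and has rank at most `m`; subadditivity of rank finishes.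
-/

namespace Matrix

variable {m n k K : Type*}

theorem rank_add_le [Fintype n] [Field K] (A B : Matrix m n K) :
    (A + B).rank ≤ A.rank + B.rank := by
  have hrange : LinearMap.range (A + B).mulVecLin ≤
      LinearMap.range A.mulVecLin ⊔ LinearMap.range B.mulVecLin := by
    rintro x ⟨v, rfl⟩
    rw [mulVecLin_add]
    exact Submodule.add_mem_sup ⟨v, rfl⟩ ⟨v, rfl⟩
  exact (Submodule.finrank_mono hrange).trans
    (Submodule.finrank_add_le_finrank_add_finrank _ _)

theorem rank_le_ncard_support [Finite m] [Fintype n] [CommSemiring K] [StrongRankCondition K]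
    (A : Matrix m n K) : A.rank ≤ {ij : m × n | A ij.1 ij.2 ≠ 0}.ncard := by
  set S := {ij : m × n | A ij.1 ij.2 ≠ 0}
  have hrows : Function.support A.row ⊆ (Set.toFinite (Prod.fst '' S)).toFinset := by
    intro i hi
    obtain ⟨j, hj⟩ := Function.ne_iff.mp hi
    exact (Set.toFinite _).mem_toFinset.mpr ⟨(i, j), hj, rfl⟩
  calc A.rank ≤ (Set.toFinite (Prod.fst '' S)).toFinset.card :=
        A.rank_le_card_of_support_subset _ hrows
    _ = (Prod.fst '' S).ncard := (Set.ncard_eq_toFinset_card _ _).symm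
    _ ≤ S.ncard := Set.ncard_image_le (Set.toFinite S)

theorem rank_map_pow_mul_le [Fintype k] [Fintype n] [CommSemiring K] [StrongRankCondition K]
    (U : Matrix m k K) (V : Matrix k n K) (p : ℕ) :
    ((U * V).map (· ^ p)).rank ≤ Fintype.card k ^ p := by
  have hfactor : (U * V).map (· ^ p) =
      of (fun i (w : Fin p → k) => ∏ t, U i (w t)) * of (fun w j => ∏ t, V (w t) j) := by
    ext i j
    simp only [map_apply, mul_apply, Fintype.sum_pow, Finset.prod_mul_distrib]
    rfl
  rw [hfactor]
  exact (rank_mul_le_left _ _).trans ((rank_le_card_width _).trans (by simp))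

end Matrix

theorem rank_abs_pow_le_of_few_negative_general
    (n r d p m : ℕ)
    (U : Matrix (Fin n) (Fin r) ℝ) (V : Matrix (Fin r) (Fin d) ℝ)
    (hneg : {ij : Fin n × Fin d | (U * V) ij.1 ij.2 < 0}.ncard ≤ m)
    (M : Matrix (Fin n) (Fin d) ℝ) (hM : ∀ i j, M i j = |(U * V) i j| ^ p) :
    M.rank ≤ r ^ p + m := by
  set N := (U * V).map (· ^ p)
  have hsupport : {ij : Fin n × Fin d | (M - N) ij.1 ij.2 ≠ 0} ⊆
      {ij | (U * V) ij.1 ij.2 < 0} := by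
    intro ij hij
    contrapose! hij
    have hnonneg : 0 ≤ (U * V) ij.1 ij.2 := not_lt.mp hij
    simp [N, hM, abs_of_nonneg hnonneg]
  calc M.rank = (N + (M - N)).rank := by rw [add_sub_cancel]
    _ ≤ N.rank + (M - N).rank := Matrix.rank_add_le _ _
    _ ≤ r ^ p + m := by
      gcongr
      · simpa using Matrix.rank_map_pow_mul_le U V p
      · exact (M - N).rank_le_ncard_support.trans
          ((Set.ncard_le_ncard hsupport (Set.toFinite _)).trans hneg)

/-- for odd p, if at most m entries of U·V are negative, then the
entrywise |·|^p transform of U·V has rank at most r^p + m. -/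
theorem rank_abs_pow_le_of_few_negative
    (n r d p m : ℕ) (hp : Odd p)
    (U : Matrix (Fin n) (Fin r) ℝ) (V : Matrix (Fin r) (Fin d) ℝ)
    (hneg : {ij : Fin n × Fin d | (U * V) ij.1 ij.2 < 0}.ncard ≤ m)
    (M : Matrix (Fin n) (Fin d) ℝ) (hM : ∀ i j, M i j = |(U * V) i j| ^ p) :
    M.rank ≤ r ^ p + m :=
  rank_abs_pow_le_of_few_negative_general n r d p m U V hneg M hM
end

section
/- Let W be a linear subspace of ℝ^n, let v, e ∈ ℝ^n be such that v + e ∈ W, every coordinate of v is either 0 or 2, v has at most s nonzero coordinates (s ≥ 1), and ‖e‖₂ ≤ α for some real α < 2. Then for every index i with v_i = 2, the i-th leverage score of W satisfies ‖P_W e_i‖₂² ≥ (2 − α)² / (2√s + α)². -/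
/-!
For any `w ∈ W`, Cauchy–Schwarz gives `⟪eᵢ, w⟫ = ⟪P_W eᵢ, w⟫ ≤ ‖P_W eᵢ‖ ‖w‖`. Take `w = v + e`:
its `i`-th coordinate is `2 + eᵢ ≥ 2 - α`, while `‖w‖ ≤ ‖v‖ + ‖e‖ ≤ 2√s + α` because `v` has at most
`s` nonzero coordinates, each equal to `2`.
-/

open scoped RealInnerProductSpace

theorem EuclideanSpace.norm_le_mul_sqrt_of_ncard_support_le {ι : Type*} [Fintype ι]
    (x : EuclideanSpace ℝ ι) {c : ℝ} {s : ℕ} (hc0 : 0 ≤ c) (hc : ∀ i, |x i| ≤ c)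
    (hs : {i | x i ≠ 0}.ncard ≤ s) : ‖x‖ ≤ c * √s := by
  classical
  have hcard : (Finset.univ.filter fun i => x i ≠ 0).card ≤ s := by
    rwa [← Set.ncard_coe_finset, Finset.coe_filter_univ]
  have hsq : ‖x‖ ^ 2 ≤ (c * √s) ^ 2 :=
    calc ‖x‖ ^ 2 = ∑ i with x i ^ 2 ≠ 0, x i ^ 2 := by
          rw [EuclideanSpace.real_norm_sq_eq, Finset.sum_filter_ne_zero]
      _ ≤ (Finset.univ.filter fun i => x i ^ 2 ≠ 0).card • c ^ 2 :=
          Finset.sum_le_card_nsmul _ _ _ fun i _ =>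
            sq_le_sq' (abs_le.mp (hc i)).1 (abs_le.mp (hc i)).2
      _ ≤ (c * √s) ^ 2 := by
          simp only [ne_eq, pow_eq_zero_iff two_ne_zero, nsmul_eq_mul, mul_pow,
            Real.sq_sqrt s.cast_nonneg]
          rw [mul_comm]
          gcongr
  exact le_of_pow_le_pow_left₀ two_ne_zero (by positivity) hsq

theorem inner_le_norm_orthogonalProjectionOnto_mul_norm {E : Type*} [NormedAddCommGroup E]
    [InnerProductSpace ℝ E] (K : Submodule ℝ E) [K.HasOrthogonalProjection] (x : E)
    {w : E} (hw : w ∈ K) : ⟪x, w⟫ ≤ ‖(K.orthogonalProjectionOnto x : E)‖ * ‖w‖ := by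
  rw [← K.inner_orthogonalProjectionOnto_eq_of_mem_right ⟨w, hw⟩]
  exact real_inner_le_norm _ _

theorem sq_div_sq_le_sq_of_le_mul {a b c : ℝ} (ha : 0 ≤ a) (hb : 0 ≤ b) (hc : 0 ≤ c)
    (h : a ≤ c * b) : a ^ 2 / b ^ 2 ≤ c ^ 2 := by
  rw [← div_pow]
  exact pow_le_pow_left₀ (div_nonneg ha hb) (div_le_of_le_mul₀ hb hc h) 2

theorem leverage_score_lower_bound_of_flat_sparse_general
    (n s : ℕ) (W : Submodule ℝ (EuclideanSpace ℝ (Fin n)))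
    (v e : EuclideanSpace ℝ (Fin n)) (hmem : v + e ∈ W)
    (hflat : ∀ i, v i = 0 ∨ v i = 2)
    (hsparse : {i : Fin n | v i ≠ 0}.ncard ≤ s)
    (α : ℝ) (hα : ‖e‖ ≤ α) (hα2 : α < 2) :
    ∀ i : Fin n, v i = 2 →
      (2 - α) ^ 2 / (2 * Real.sqrt s + α) ^ 2 ≤
        ‖(Submodule.orthogonalProjection W (EuclideanSpace.single i 1) :
          EuclideanSpace ℝ (Fin n))‖ ^ 2 := by
  intro i hi
  have hα0 : 0 ≤ α := (norm_nonneg e).trans hα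
  have hv : ‖v‖ ≤ 2 * √s :=
    v.norm_le_mul_sqrt_of_ncard_support_le zero_le_two
      (fun j => by rcases hflat j with h | h <;> norm_num [h]) hsparse
  have hei : -α ≤ e i := neg_le_of_abs_le ((PiLp.norm_apply_le e i).trans hα)
  have hcs := inner_le_norm_orthogonalProjectionOnto_mul_norm W (EuclideanSpace.single i 1) hmem
  simp only [EuclideanSpace.inner_single_left, map_one, one_mul] at hcs
  refine sq_div_sq_le_sq_of_le_mul (by linarith) (by positivity) (norm_nonneg _) ?_
  calc 2 - α ≤ (v + e) i := by simp only [PiLp.add_apply, hi]; linarith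
    _ ≤ _ := hcs
    _ ≤ _ := by gcongr; exact (norm_add_le v e).trans (add_le_add hv hα)

/-- if v + e ∈ W where v is a {0,2}-valued vector with at most s
nonzero coordinates (s ≥ 1) and ‖e‖ ≤ α < 2, then every index i with v_i = 2 has
leverage score at least (2 − α)²/(2√s + α)². -/
theorem leverage_score_lower_bound_of_flat_sparse
    (n s : ℕ) (hs : 1 ≤ s) (W : Submodule ℝ (EuclideanSpace ℝ (Fin n)))
    (v e : EuclideanSpace ℝ (Fin n)) (hmem : v + e ∈ W)
    (hflat : ∀ i, v i = 0 ∨ v i = 2)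
    (hsparse : {i : Fin n | v i ≠ 0}.ncard ≤ s)
    (α : ℝ) (hα : ‖e‖ ≤ α) (hα2 : α < 2) :
    ∀ i : Fin n, v i = 2 →
      (2 - α) ^ 2 / (2 * Real.sqrt s + α) ^ 2 ≤
        ‖(Submodule.orthogonalProjection W (EuclideanSpace.single i 1) :
          EuclideanSpace ℝ (Fin n))‖ ^ 2 :=
  leverage_score_lower_bound_of_flat_sparse_general n s W v e hmem hflat hsparse α hα hα2
end

section
/- Let v, e ∈ ℝ^n be such that every coordinate of v is either 0 or 2, v has at most s nonzero coordinates (s ≥ 1), and ‖e‖₂ ≤ α for some real α < 2. Define S = {i ∈ {1,…,n} : |(v+e)_i| ≥ 2 − α}. Then the support of v is contained in S, and |S| ≤ (2√s + α)² / (2 − α)². -/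
/-- if v is {0,2}-valued with at most s ≥ 1 nonzero coordinates and
‖e‖ ≤ α < 2, then S = {i : |(v+e)_i| ≥ 2 − α} contains the support of v and has
cardinality at most (2√s + α)²/(2 − α)². -/
theorem support_subset_and_card_bound
    (n s : ℕ) (hs : 1 ≤ s) (v e : EuclideanSpace ℝ (Fin n))
    (hflat : ∀ i, v i = 0 ∨ v i = 2)
    (hsparse : {i : Fin n | v i ≠ 0}.ncard ≤ s)
    (α : ℝ) (hα : ‖e‖ ≤ α) (hα2 : α < 2) :
    {i : Fin n | v i ≠ 0} ⊆ {i : Fin n | 2 - α ≤ |(v + e) i|} ∧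
    ({i : Fin n | 2 - α ≤ |(v + e) i|}.ncard : ℝ) ≤
      (2 * Real.sqrt s + α) ^ 2 / (2 - α) ^ 2 := by
  have hα0 : 0 ≤ α := le_trans (norm_nonneg e) hα
  -- coordinatewise bound on e
  have hcoord : ∀ i, |e i| ≤ α := by
    intro i
    refine le_trans ?_ hα
    rw [EuclideanSpace.norm_eq]
    have h1 : |e i| = Real.sqrt (‖e i‖ ^ 2) := by
      rw [Real.sqrt_sq_eq_abs]; simp
    rw [h1]
    apply Real.sqrt_le_sqrt
    exact Finset.single_le_sum (f := fun j => ‖e j‖ ^ 2)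
      (fun j _ => by positivity) (Finset.mem_univ i)
  -- part 1
  have hsub : {i : Fin n | v i ≠ 0} ⊆ {i : Fin n | 2 - α ≤ |(v + e) i|} := by
    intro i hi
    simp only [Set.mem_setOf_eq] at hi ⊢
    have hv2 : v i = 2 := (hflat i).resolve_left hi
    have : (v + e) i = v i + e i := rfl
    rw [this, hv2]
    have := hcoord i
    have h1 : -α ≤ e i := (abs_le.mp this).1
    exact le_trans (by linarith) (le_abs_self _)
  refine ⟨hsub, ?_⟩
  set S : Set (Fin n) := {i : Fin n | 2 - α ≤ |(v + e) i|} with hS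
  have hSfin : S.Finite := Set.toFinite _
  -- norm of v
  have hvnorm : ‖v‖ ≤ 2 * Real.sqrt s := by
    rw [EuclideanSpace.norm_eq]
    have h4 : ∀ i, ‖v i‖ ^ 2 = if v i ≠ 0 then (4:ℝ) else 0 := by
      intro i
      rcases hflat i with h | h <;> simp [h] <;> norm_num
    have hsum : ∑ i, ‖v i‖ ^ 2 = 4 * ({i : Fin n | v i ≠ 0}.ncard : ℝ) := by
      simp_rw [h4]
      rw [Finset.sum_ite, Finset.sum_const, Finset.sum_const]
      rw [Set.ncard_eq_toFinset_card']
      simp [Set.toFinset_setOf, mul_comm]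
    rw [hsum]
    have : (({i : Fin n | v i ≠ 0}.ncard : ℝ)) ≤ s := by exact_mod_cast hsparse
    calc Real.sqrt (4 * ({i : Fin n | v i ≠ 0}.ncard : ℝ))
        ≤ Real.sqrt (4 * s) := Real.sqrt_le_sqrt (by linarith)
      _ = 2 * Real.sqrt s := by
          rw [show (4:ℝ) * s = 2^2 * s by ring, Real.sqrt_mul (by positivity),
            Real.sqrt_sq (by norm_num)]
  have hve : ‖v + e‖ ≤ 2 * Real.sqrt s + α :=
    le_trans (norm_add_le v e) (by linarith)
  -- counting
  have hcount : (2 - α)^2 * (S.ncard : ℝ) ≤ (2 * Real.sqrt s + α)^2 := by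
    have h1 : (2 - α)^2 * (S.ncard : ℝ) ≤ ∑ i, ‖(v + e) i‖ ^ 2 := by
      rw [Set.ncard_eq_toFinset_card']
      have : (2 - α)^2 * (S.toFinset.card : ℝ) = ∑ i ∈ S.toFinset, (2 - α)^2 := by
        rw [Finset.sum_const]; ring
      rw [this]
      refine le_trans (Finset.sum_le_sum ?_) (Finset.sum_le_sum_of_subset_of_nonneg
        (Finset.subset_univ _) (fun i _ _ => by positivity))
      intro i hi
      rw [Set.mem_toFinset] at hi
      have hi' : 2 - α ≤ |(v + e) i| := hi
      have : ‖(v + e) i‖ = |(v + e) i| := rfl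
      rw [this]
      have h2α : (0:ℝ) ≤ 2 - α := by linarith
      exact pow_le_pow_left₀ h2α hi' 2
    have h2 : ∑ i, ‖(v + e) i‖ ^ 2 = ‖v + e‖ ^ 2 := by
      rw [EuclideanSpace.norm_eq, Real.sq_sqrt (by positivity)]
    have h3 : ‖v + e‖ ^ 2 ≤ (2 * Real.sqrt s + α)^2 :=
      pow_le_pow_left₀ (norm_nonneg _) hve 2
    linarith
  have h2α' : (0:ℝ) < 2 - α := by linarith
  have h2α : (0:ℝ) < (2 - α)^2 := by positivity
  rw [le_div_iff₀ h2α]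
  calc (S.ncard : ℝ) * (2 - α)^2 = (2 - α)^2 * (S.ncard : ℝ) := by ring
    _ ≤ _ := hcount
end

section
/- Let y ∈ ℝ^n and let i be an index such that |y_t| ≤ |y_i| for all t and y_i ≠ 0. Let θ ≥ 0 and suppose at most s indices t satisfy |y_t| > θ·|y_i|. Then ‖y‖₂² ≤ (s + n·θ²)·y_i². Consequently, if y belongs to a linear subspace W of ℝ^n, then the i-th leverage score of W satisfies ‖P_W e_i‖₂² ≥ 1/(s + n·θ²). -/
/-!
Each of the at most `s` coordinates above the threshold `θ |y i|` contributes at most `y i ^ 2`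
to `‖y‖ ^ 2`, and each of the remaining ones at most `θ ^ 2 * y i ^ 2`. For `y ∈ W` we have
`y i = ⟪P_W e_i, y⟫`, so Cauchy–Schwarz gives `y i ^ 2 ≤ ‖P_W e_i‖ ^ 2 * ‖y‖ ^ 2`, and the norm
bound turns this into the leverage bound.
-/

open Finset

theorem EuclideanSpace.norm_sq_le_ncard_mul_add {ι : Type*} [Fintype ι]
    (y : EuclideanSpace ℝ ι) {M c : ℝ} (hM : ∀ t, |y t| ≤ M) :
    ‖y‖ ^ 2 ≤ {t | c < |y t|}.ncard * M ^ 2 + Fintype.card ι * c ^ 2 := by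
  classical
  have hterm : ∀ t, y t ^ 2 ≤ (if c < |y t| then M ^ 2 else 0) + c ^ 2 := by
    intro t
    rw [← sq_abs (y t)]
    split_ifs with h
    · nlinarith [hM t, abs_nonneg (y t), sq_nonneg c]
    · nlinarith [not_lt.mp h, abs_nonneg (y t)]
  calc ‖y‖ ^ 2 = ∑ t, y t ^ 2 := by simp [EuclideanSpace.norm_sq_eq]
    _ ≤ ∑ t, ((if c < |y t| then M ^ 2 else 0) + c ^ 2) := sum_le_sum fun t _ => hterm t
    _ = {t | c < |y t|}.ncard * M ^ 2 + Fintype.card ι * c ^ 2 := by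
      rw [sum_add_distrib, ← sum_filter, Set.ncard_eq_toFinset_card', Set.toFinset_ofPred]
      simp

theorem Submodule.sq_inner_le_norm_starProjection_sq_mul {E : Type*}
    [NormedAddCommGroup E] [InnerProductSpace ℝ E] (W : Submodule ℝ E)
    [W.HasOrthogonalProjection] (v : E) {y : E} (hy : y ∈ W) :
    inner ℝ v y ^ 2 ≤ ‖W.starProjection v‖ ^ 2 * ‖y‖ ^ 2 := by
  have hinner : inner ℝ (W.starProjection v) y = inner ℝ v y := by
    rw [W.inner_starProjection_left_eq_right, starProjection_eq_self_iff.mpr hy]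
  rw [← hinner, ← mul_pow, ← sq_abs]
  exact pow_le_pow_left₀ (abs_nonneg _) (abs_real_inner_le_norm _ _) 2

theorem EuclideanSpace.sq_apply_le_norm_starProjection_single_sq_mul {ι : Type*} [Fintype ι]
    [DecidableEq ι] (W : Submodule ℝ (EuclideanSpace ℝ ι)) {y : EuclideanSpace ℝ ι} (hy : y ∈ W)
    (i : ι) : y i ^ 2 ≤ ‖W.starProjection (EuclideanSpace.single i 1)‖ ^ 2 * ‖y‖ ^ 2 := by
  simpa [EuclideanSpace.inner_single_left] using
    W.sq_inner_le_norm_starProjection_sq_mul (EuclideanSpace.single i 1) hy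

theorem norm_sq_le_and_leverage_lower_bound_general
    (n s : ℕ) (y : EuclideanSpace ℝ (Fin n)) (i : Fin n)
    (hmax : ∀ t : Fin n, |y t| ≤ |y i|) (hne : y i ≠ 0)
    (θ : ℝ)
    (hfew : {t : Fin n | θ * |y i| < |y t|}.ncard ≤ s) :
    ‖y‖ ^ 2 ≤ ((s : ℝ) + n * θ ^ 2) * (y i) ^ 2 ∧
    ∀ W : Submodule ℝ (EuclideanSpace ℝ (Fin n)), y ∈ W →
      1 / ((s : ℝ) + n * θ ^ 2) ≤
        ‖(W.orthogonalProjectionOnto (EuclideanSpace.single i 1) :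
          EuclideanSpace ℝ (Fin n))‖ ^ 2 := by
  have hnorm : ‖y‖ ^ 2 ≤ ((s : ℝ) + n * θ ^ 2) * (y i) ^ 2 := by
    have hs : ({t : Fin n | θ * |y i| < |y t|}.ncard : ℝ) ≤ s := by exact_mod_cast hfew
    calc ‖y‖ ^ 2 ≤ {t | θ * |y i| < |y t|}.ncard * |y i| ^ 2 + n * (θ * |y i|) ^ 2 := by
          simpa using y.norm_sq_le_ncard_mul_add hmax
      _ ≤ s * |y i| ^ 2 + n * (θ * |y i|) ^ 2 := by gcongr
      _ = ((s : ℝ) + n * θ ^ 2) * (y i) ^ 2 := by rw [mul_pow, sq_abs]; ring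
  refine ⟨hnorm, fun W hy => ?_⟩
  have hpos : 0 < (s : ℝ) + n * θ ^ 2 := by
    by_cases hθ : θ = 0
    · have hi : i ∈ {t : Fin n | θ * |y i| < |y t|} := by simpa [hθ] using hne
      have : 0 < s := ((Set.ncard_pos (Set.toFinite _)).mpr ⟨i, hi⟩).trans_le hfew
      positivity
    · have : 0 < n := i.pos
      positivity
  set p := W.starProjection (EuclideanSpace.single i 1)
  show 1 / _ ≤ ‖p‖ ^ 2
  rw [div_le_iff₀ hpos]
  refine le_of_mul_le_mul_right ?_ (by positivity : 0 < y i ^ 2)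
  calc 1 * y i ^ 2 ≤ ‖p‖ ^ 2 * ‖y‖ ^ 2 := by
        simpa using EuclideanSpace.sq_apply_le_norm_starProjection_single_sq_mul W hy i
    _ ≤ ‖p‖ ^ 2 * (((s : ℝ) + n * θ ^ 2) * y i ^ 2) := by gcongr
    _ = ‖p‖ ^ 2 * ((s : ℝ) + n * θ ^ 2) * y i ^ 2 := by ring

/-- if y has maximal coordinate (in magnitude) y_i ≠ 0 and at most
s coordinates exceed θ·|y_i| in magnitude, then ‖y‖² ≤ (s + n·θ²)·y_i²; hence if
y lies in a subspace W, the i-th leverage score of W is at least 1/(s + n·θ²). -/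
theorem norm_sq_le_and_leverage_lower_bound
    (n s : ℕ) (y : EuclideanSpace ℝ (Fin n)) (i : Fin n)
    (hmax : ∀ t : Fin n, |y t| ≤ |y i|) (hne : y i ≠ 0)
    (θ : ℝ) (hθ : 0 ≤ θ)
    (hfew : {t : Fin n | θ * |y i| < |y t|}.ncard ≤ s) :
    ‖y‖ ^ 2 ≤ ((s : ℝ) + n * θ ^ 2) * (y i) ^ 2 ∧
    ∀ W : Submodule ℝ (EuclideanSpace ℝ (Fin n)), y ∈ W →
      1 / ((s : ℝ) + n * θ ^ 2) ≤
        ‖(W.orthogonalProjectionOnto (EuclideanSpace.single i 1) :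
          EuclideanSpace ℝ (Fin n))‖ ^ 2 :=
  norm_sq_le_and_leverage_lower_bound_general n s y i hmax hne θ hfew
end
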